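/- Bound on the second-order directional derivative of the moment tensor: for x ∈ ℝ^L, aperiodic considerations aside, let z = x − ((𝟙^T x)/L)𝟙 and θ = (1/L)𝟙 − ρ, and v = (z, θ). Then the first-order directional derivative of M¹_{x,ρ} along v vanishes, and ‖∇_v M²_{x,ρ}‖² ≤ 4 ‖z‖² ‖x‖². -/

import Mathlib

/-!
Writing `z = x - m` with `m` the mean of `x`, the derivative of `M²` along `v` is exactly the
second moment of `z` under the nonnegative weight `w = 1/L + ρ`, because the terms linear in `z`
and the constant terms are killed by `∑ z = 0` and `∑ θ = 0`. Weighted Cauchy–Schwarz in the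
shift variable, followed by summing over the two tensor indices, bounds its squared norm by
`(∑ w)² ‖z‖⁴ = 4 ‖z‖⁴`, and `‖z‖ ≤ ‖x‖`. The first-order derivative vanishes for the same reason.
-/

open Finset

variable {G : Type*} [AddCommGroup G] [Fintype G]

/-- `M²_{z,w}` for an arbitrary weight `w`, not necessarily a probability vector. -/
def secondMoment (w z : G → ℝ) (k₁ k₂ : G) : ℝ :=
  ∑ ℓ, w ℓ * (z (k₁ - ℓ) * z (k₂ - ℓ))

lemma sum_comp_sub_left (f : G → ℝ) (k : G) : ∑ ℓ, f (k - ℓ) = ∑ j, f j :=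
  (Equiv.subLeft k).sum_comp f

lemma sum_one_div_card : ∑ _ : G, 1 / (Fintype.card G : ℝ) = 1 := by
  rw [sum_const, card_univ, nsmul_eq_mul]
  exact mul_one_div_cancel (Nat.cast_ne_zero.mpr Fintype.card_ne_zero)

lemma sum_sub_mean_eq_zero (x : G → ℝ) :
    ∑ i, (x i - (∑ j, x j) / Fintype.card G) = 0 := by
  rw [sum_sub_distrib, sum_const, card_univ, nsmul_eq_mul,
    mul_div_cancel₀ _ (Nat.cast_ne_zero.mpr Fintype.card_ne_zero), sub_self]

lemma sum_sq_sub_mean_le_sum_sq (x : G → ℝ) :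
    ∑ i, (x i - (∑ j, x j) / Fintype.card G) ^ 2 ≤ ∑ i, x i ^ 2 := by
  set m := (∑ j, x j) / Fintype.card G
  have hsplit : ∑ i, x i ^ 2 = ∑ i, (x i - m) ^ 2 + 2 * m * ∑ i, (x i - m) + ∑ _ : G, m ^ 2 := by
    rw [mul_sum, ← sum_add_distrib, ← sum_add_distrib]
    exact sum_congr rfl fun i _ => by ring
  rw [hsplit, sum_sub_mean_eq_zero]
  have : 0 ≤ ∑ _ : G, m ^ 2 := sum_nonneg fun _ _ => sq_nonneg m
  linarith

lemma moment_one_deriv_eq_zero (x ρ : G → ℝ) (hρ1 : ∑ s, ρ s = 1) (k : G) :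
    ∑ ℓ, ((1 / (Fintype.card G : ℝ) - ρ ℓ) * x (k - ℓ)
      + ρ ℓ * (x (k - ℓ) - (∑ j, x j) / (Fintype.card G : ℝ))) = 0 := by
  calc _ = ∑ ℓ, (x (k - ℓ) / Fintype.card G - (∑ j, x j) / Fintype.card G * ρ ℓ) :=
        sum_congr rfl fun ℓ _ => by ring
    _ = (∑ ℓ, x (k - ℓ)) / Fintype.card G - (∑ j, x j) / Fintype.card G * ∑ ℓ, ρ ℓ := by
        rw [sum_sub_distrib, ← sum_div, ← mul_sum]
    _ = 0 := by rw [sum_comp_sub_left, hρ1, mul_one, sub_self]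

lemma moment_two_deriv_eq_secondMoment (x ρ : G → ℝ) (hρ1 : ∑ s, ρ s = 1) (k₁ k₂ : G) :
    ∑ ℓ, ((1 / (Fintype.card G : ℝ) - ρ ℓ) * (x (k₁ - ℓ) * x (k₂ - ℓ))
      + ρ ℓ * ((x (k₁ - ℓ) - (∑ j, x j) / (Fintype.card G : ℝ)) * x (k₂ - ℓ)
        + x (k₁ - ℓ) * (x (k₂ - ℓ) - (∑ j, x j) / (Fintype.card G : ℝ))))
      = secondMoment (fun ℓ => 1 / (Fintype.card G : ℝ) + ρ ℓ)
          (fun i => x i - (∑ j, x j) / Fintype.card G) k₁ k₂ := by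
  set n : ℝ := (Fintype.card G : ℝ)
  set m := (∑ j, x j) / n
  set z : G → ℝ := fun i => x i - m
  have hθ : ∑ ℓ, (1 / n - ρ ℓ) = 0 := by rw [sum_sub_distrib, sum_one_div_card, hρ1, sub_self]
  have hz : ∀ k, ∑ ℓ, z (k - ℓ) = 0 := fun k => by
    rw [sum_comp_sub_left]; exact sum_sub_mean_eq_zero x
  rw [secondMoment, ← sub_eq_zero, ← sum_sub_distrib]
  calc _ = ∑ ℓ, (m / n * (z (k₁ - ℓ) + z (k₂ - ℓ)) + m ^ 2 * (1 / n - ρ ℓ)) :=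
        sum_congr rfl fun ℓ _ => by simp only [z]; ring
    _ = m / n * (∑ ℓ, z (k₁ - ℓ) + ∑ ℓ, z (k₂ - ℓ)) + m ^ 2 * ∑ ℓ, (1 / n - ρ ℓ) := by
        rw [sum_add_distrib, ← mul_sum, ← mul_sum, sum_add_distrib]
    _ = 0 := by rw [hz, hz, hθ]; ring

lemma sum_sq_secondMoment_le (w z : G → ℝ) (hw : ∀ ℓ, 0 ≤ w ℓ) :
    ∑ k₁, ∑ k₂, secondMoment w z k₁ k₂ ^ 2 ≤ (∑ ℓ, w ℓ) ^ 2 * (∑ i, z i ^ 2) ^ 2 := by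
  have cauchySchwarz : ∀ k₁ k₂, secondMoment w z k₁ k₂ ^ 2
      ≤ (∑ ℓ, w ℓ) * ∑ ℓ, w ℓ * (z (k₁ - ℓ) ^ 2 * z (k₂ - ℓ) ^ 2) := fun k₁ k₂ =>
    sum_sq_le_sum_mul_sum_of_sq_le_mul _ (fun ℓ _ => hw ℓ)
      (fun ℓ _ => mul_nonneg (hw ℓ) (by positivity)) (fun ℓ _ => le_of_eq (by ring))
  have hshift : ∀ ℓ, ∑ k, z (k - ℓ) ^ 2 = ∑ i, z i ^ 2 := fun ℓ =>
    sum_translate ℓ fun i => z i ^ 2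
  calc _ ≤ ∑ k₁, ∑ k₂, (∑ ℓ, w ℓ) * ∑ ℓ, w ℓ * (z (k₁ - ℓ) ^ 2 * z (k₂ - ℓ) ^ 2) :=
        sum_le_sum fun k₁ _ => sum_le_sum fun k₂ _ => cauchySchwarz k₁ k₂
    _ = (∑ ℓ, w ℓ) * ∑ ℓ, w ℓ * ((∑ k₁, z (k₁ - ℓ) ^ 2) * ∑ k₂, z (k₂ - ℓ) ^ 2) := by
        simp only [← mul_sum]
        congr 1
        simp only [mul_sum, sum_mul]
        rw [sum_comm_cycle]
        exact sum_congr rfl fun ℓ _ => sum_comm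
    _ = (∑ ℓ, w ℓ) ^ 2 * (∑ i, z i ^ 2) ^ 2 := by
        simp only [hshift]
        rw [← sum_mul]
        ring

/-- Directional-derivative bound for the moment tensors: with the centering
perturbation `z = x - ((𝟙ᵀx)/L)𝟙`, `θ = (1/L)𝟙 - ρ` and `v = (z, θ)`, the
first-order directional derivative of `M¹_{x,ρ}` along `v` vanishes, and
`‖∇_v M²_{x,ρ}‖² ≤ 4 ‖z‖² ‖x‖²`. -/
theorem stmt_15 (L : ℕ) [NeZero L] (x ρ : ZMod L → ℝ)
    (hρ0 : ∀ s, 0 ≤ ρ s) (hρ1 : ∑ s, ρ s = 1) :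
    (∀ k : ZMod L,
      (∑ ℓ, ((1 / (L : ℝ) - ρ ℓ) * x (k - ℓ)
        + ρ ℓ * (x (k - ℓ) - (∑ j, x j) / (L : ℝ)))) = 0)
    ∧ (∑ k₁ : ZMod L, ∑ k₂ : ZMod L,
        (∑ ℓ, ((1 / (L : ℝ) - ρ ℓ) * (x (k₁ - ℓ) * x (k₂ - ℓ))
          + ρ ℓ * ((x (k₁ - ℓ) - (∑ j, x j) / (L : ℝ)) * x (k₂ - ℓ)
            + x (k₁ - ℓ) * (x (k₂ - ℓ) - (∑ j, x j) / (L : ℝ))))) ^ 2)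
      ≤ 4 * (∑ i, (x i - (∑ j, x j) / (L : ℝ)) ^ 2) * (∑ i, x i ^ 2) := by
  rw [show (L : ℝ) = Fintype.card (ZMod L) by rw [ZMod.card]]
  refine ⟨moment_one_deriv_eq_zero x ρ hρ1, ?_⟩
  have hw : ∀ ℓ, 0 ≤ 1 / (Fintype.card (ZMod L) : ℝ) + ρ ℓ := fun ℓ => by
    have := hρ0 ℓ; positivity
  have hwsum : ∑ ℓ, (1 / (Fintype.card (ZMod L) : ℝ) + ρ ℓ) = 2 := by
    rw [sum_add_distrib, sum_one_div_card, hρ1]; norm_num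
  simp only [moment_two_deriv_eq_secondMoment x ρ hρ1]
  calc _ ≤ 2 ^ 2 * (∑ i, (x i - (∑ j, x j) / Fintype.card (ZMod L)) ^ 2) ^ 2 := by
        rw [← hwsum]; exact sum_sq_secondMoment_le _ _ hw
    _ = 4 * (∑ i, (x i - (∑ j, x j) / Fintype.card (ZMod L)) ^ 2)
          * ∑ i, (x i - (∑ j, x j) / Fintype.card (ZMod L)) ^ 2 := by ring
    _ ≤ _ := mul_le_mul_of_nonneg_left (sum_sq_sub_mean_le_sum_sq x) (by positivity)
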